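/- Let f : ℝ^N → ℝ be differentiable with L-Lipschitz gradient (L > 0), Ψ : ℝ^N → ℝ convex, and F = f + Ψ. Let H be an N×N symmetric matrix with H ⪰ L·I, let x, p ∈ ℝ^N, define Q_H(p; x) = ⟨∇f(x), p⟩ + (1/2)⟨p, H p⟩ + Ψ(x + p) − Ψ(x), and suppose Q_H(p; x) ≤ 0. Then for every σ₁ ∈ (0,1], the trust-region sufficient decrease condition F(x + p) − F(x) ≤ σ₁ Q_H(p; x) holds. -/

import Mathlib

/-!
Along the segment `t ↦ x + t • p` the slope of `f` exceeds `⟪∇f x, p⟫` by at most `L t ‖p‖²`;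
comparing with a primitive of that bound gives the descent inequality
`f (x + p) ≤ f x + ⟪∇f x, p⟫ + (L/2) ‖p‖²`.
Since `H ⪰ L·I`, the right-hand side plus `Ψ (x + p) - Ψ x` is at most `Q_H(p; x)`, so
`F (x + p) - F x ≤ Q_H(p; x) ≤ σ₁ Q_H(p; x)`, the last step because `Q_H(p; x) ≤ 0` and `σ₁ ≤ 1`.
-/

open scoped RealInnerProductSpace NNReal

section Descent

variable {E : Type*} [NormedAddCommGroup E] [InnerProductSpace ℝ E] [CompleteSpace E]
  {f : E → ℝ}

theorem HasGradientAt.hasDerivAt_comp_add_smul {f' x p : E} {t : ℝ}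
    (h : HasGradientAt f f' (x + t • p)) :
    HasDerivAt (fun s : ℝ => f (x + s • p)) ⟪f', p⟫ t := by
  have hline : HasDerivAt (fun s : ℝ => x + s • p) p t := by
    simpa using ((hasDerivAt_id t).smul_const p).const_add x
  exact (hasGradientAt_iff_hasFDerivAt.mp h).comp_hasDerivAt t hline

theorem LipschitzWith.inner_gradient_add_smul_le {K : ℝ≥0} (hlip : LipschitzWith K (gradient f))
    (x p : E) {t : ℝ} (ht : 0 ≤ t) :
    ⟪gradient f (x + t • p), p⟫ ≤ ⟪gradient f x, p⟫ + K * t * ‖p‖ ^ 2 := by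
  have hgrad : ‖gradient f (x + t • p) - gradient f x‖ ≤ K * (t * ‖p‖) := by
    simpa [← dist_eq_norm, norm_smul, abs_of_nonneg ht] using hlip.dist_le_mul (x + t • p) x
  calc ⟪gradient f (x + t • p), p⟫
      = ⟪gradient f x, p⟫ + ⟪gradient f (x + t • p) - gradient f x, p⟫ := by
        rw [inner_sub_left]; ring
    _ ≤ ⟪gradient f x, p⟫ + ‖gradient f (x + t • p) - gradient f x‖ * ‖p‖ := by
        gcongr; exact real_inner_le_norm _ _
    _ ≤ ⟪gradient f x, p⟫ + K * (t * ‖p‖) * ‖p‖ := by gcongr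
    _ = ⟪gradient f x, p⟫ + K * t * ‖p‖ ^ 2 := by ring

theorem Differentiable.le_add_inner_gradient_of_lipschitzWith (hf : Differentiable ℝ f)
    {K : ℝ≥0} (hlip : LipschitzWith K (gradient f)) (x p : E) :
    f (x + p) ≤ f x + ⟪gradient f x, p⟫ + K / 2 * ‖p‖ ^ 2 := by
  have hderiv (t : ℝ) :
      HasDerivAt (fun s : ℝ => f (x + s • p)) ⟪gradient f (x + t • p), p⟫ t :=
    (hf _).hasGradientAt.hasDerivAt_comp_add_smul
  have hbound (t : ℝ) :
      HasDerivAt (fun s : ℝ => f x + s * ⟪gradient f x, p⟫ + K / 2 * s ^ 2 * ‖p‖ ^ 2)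
        (⟪gradient f x, p⟫ + K * t * ‖p‖ ^ 2) t := by
    refine ((((hasDerivAt_id' t).mul_const _).const_add _).fun_add
      (((hasDerivAt_pow 2 t).const_mul _).mul_const _)).congr_deriv ?_
    push_cast; ring
  simpa using image_le_of_deriv_right_le_deriv_boundary (a := 0) (b := 1)
    (fun t _ => (hderiv t).continuousAt.continuousWithinAt)
    (fun t _ => (hderiv t).hasDerivWithinAt) (by simp)
    (fun t _ => (hbound t).continuousAt.continuousWithinAt)
    (fun t _ => (hbound t).hasDerivWithinAt)
    (fun t ht => hlip.inner_gradient_add_smul_le x p ht.1) (Set.right_mem_Icc.2 zero_le_one)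

end Descent

theorem trust_region_sufficient_decrease_general {N : ℕ} (L : ℝ) (hL : 0 < L)
    (f : EuclideanSpace ℝ (Fin N) → ℝ) (hf : Differentiable ℝ f)
    (hlip : LipschitzWith (Real.toNNReal L) (fun z => gradient f z))
    (Ψ : EuclideanSpace ℝ (Fin N) → ℝ)
    (F : EuclideanSpace ℝ (Fin N) → ℝ) (hF : ∀ z, F z = f z + Ψ z)
    (H : EuclideanSpace ℝ (Fin N) →L[ℝ] EuclideanSpace ℝ (Fin N))
    (hHlb : ∀ v, L * ‖v‖ ^ 2 ≤ ⟪v, H v⟫)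
    (x p : EuclideanSpace ℝ (Fin N))
    (hQnonpos : ⟪gradient f x, p⟫ + (1 / 2) * ⟪p, H p⟫ + Ψ (x + p) - Ψ x ≤ 0)
    (σ₁ : ℝ) (hσ₁' : σ₁ ≤ 1) :
    F (x + p) - F x
      ≤ σ₁ * (⟪gradient f x, p⟫ + (1 / 2) * ⟪p, H p⟫ + Ψ (x + p) - Ψ x) := by
  have hdescent := hf.le_add_inner_gradient_of_lipschitzWith hlip x p
  rw [Real.coe_toNNReal L hL.le] at hdescent
  have hdecrease :
      F (x + p) - F x ≤ ⟪gradient f x, p⟫ + (1 / 2) * ⟪p, H p⟫ + Ψ (x + p) - Ψ x := by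
    rw [hF, hF]
    linarith [hHlb p]
  exact hdecrease.trans (le_mul_of_le_one_left hQnonpos hσ₁')

/-- ingredient of Lemma 3 of the paper: if `H ⪰ L·I` and the model
value `Q_H(p; x) ≤ 0`, then for every `σ₁ ∈ (0,1]` the trust-region sufficient decrease
condition `F(x + p) − F(x) ≤ σ₁ Q_H(p; x)` holds, where `F = f + Ψ`. -/
theorem trust_region_sufficient_decrease {N : ℕ} (L : ℝ) (hL : 0 < L)
    (f : EuclideanSpace ℝ (Fin N) → ℝ) (hf : Differentiable ℝ f)
    (hlip : LipschitzWith (Real.toNNReal L) (fun z => gradient f z))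
    (Ψ : EuclideanSpace ℝ (Fin N) → ℝ) (hΨ : ConvexOn ℝ Set.univ Ψ)
    (F : EuclideanSpace ℝ (Fin N) → ℝ) (hF : ∀ z, F z = f z + Ψ z)
    (H : EuclideanSpace ℝ (Fin N) →L[ℝ] EuclideanSpace ℝ (Fin N))
    (hHsymm : ∀ v w, ⟪H v, w⟫ = ⟪v, H w⟫)
    (hHlb : ∀ v, L * ‖v‖ ^ 2 ≤ ⟪v, H v⟫)
    (x p : EuclideanSpace ℝ (Fin N))
    (hQnonpos : ⟪gradient f x, p⟫ + (1 / 2) * ⟪p, H p⟫ + Ψ (x + p) - Ψ x ≤ 0)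
    (σ₁ : ℝ) (hσ₁ : 0 < σ₁) (hσ₁' : σ₁ ≤ 1) :
    F (x + p) - F x
      ≤ σ₁ * (⟪gradient f x, p⟫ + (1 / 2) * ⟪p, H p⟫ + Ψ (x + p) - Ψ x) :=
  trust_region_sufficient_decrease_general L hL f hf hlip Ψ F hF H hHlb x p hQnonpos σ₁ hσ₁'
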